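/- arXiv:1712.02472 — 4 statements merged into one kernel-verified Lean document; each statement's English description precedes it below -/
import Mathlib

section
/- For every x ∈ (0, 1/2), the series ∑_{k≥1} C(2k,k) x^{2k−1}/(2k−1) converges to (4x² + √(1−4x²) − 1)/(x√(1−4x²)). -/
/-!
Since `C(2k+2, k+1) / (2k+1) = 2 Cat_k`, the series is `2x · C(x²)`, where `C(y) = ∑ Cat_n yⁿ` is
the Catalan generating function. The Catalan recurrence turns into the Cauchy-product identity
`C(y) = 1 + y C(y)²`, and the bound `C(1/4) ≤ 2`, read off the telescoping partial sums
`∑_{n<N} Cat_n / 4ⁿ = 2 - 2 C(2N, N) / 4ᴺ`, gives convergence and selects the root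
`C(y) = (1 - √(1 - 4y)) / (2y)`. Finally `2x · C(x²) = (1 - √(1 - 4x²)) / x`, which is the stated
closed form.
-/

open Real

theorem centralBinom_succ_eq_mul_catalan (n : ℕ) :
    (n + 1).centralBinom = 2 * (2 * n + 1) * catalan n := by
  apply Nat.eq_of_mul_eq_mul_left n.add_one_pos
  rw [Nat.succ_mul_centralBinom_succ, ← succ_mul_catalan_eq_centralBinom]
  ring

theorem sum_range_catalan_div_four_pow (N : ℕ) :
    ∑ n ∈ Finset.range N, (catalan n : ℝ) / 4 ^ n
      = 2 - 2 * (N.centralBinom : ℝ) / 4 ^ N := by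
  induction N with
  | zero => simp
  | succ N ih =>
    have hN : ((N : ℝ) + 1) * catalan N = N.centralBinom := by
      exact_mod_cast succ_mul_catalan_eq_centralBinom N
    have hN' : ((N + 1).centralBinom : ℝ) = 2 * (2 * N + 1) * catalan N := by
      exact_mod_cast centralBinom_succ_eq_mul_catalan N
    rw [Finset.sum_range_succ, ih, hN', ← hN, pow_succ]
    field_simp
    ring

theorem sum_range_catalan_div_four_pow_le_two (N : ℕ) :
    ∑ n ∈ Finset.range N, (catalan n : ℝ) / 4 ^ n ≤ 2 := by
  rw [sum_range_catalan_div_four_pow]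
  linarith [show 0 ≤ 2 * (N.centralBinom : ℝ) / 4 ^ N by positivity]

theorem summable_catalan_div_four_pow : Summable fun n => (catalan n : ℝ) / 4 ^ n :=
  summable_of_sum_range_le (fun n => by positivity) sum_range_catalan_div_four_pow_le_two

section CatalanSeries

variable {y : ℝ}

theorem catalan_mul_pow_le (hy0 : 0 ≤ y) (hy : y ≤ 1 / 4) (n : ℕ) :
    (catalan n : ℝ) * y ^ n ≤ catalan n / 4 ^ n := by
  rw [div_eq_mul_one_div, ← one_div_pow]
  gcongr

theorem summable_catalan_mul_pow (hy0 : 0 ≤ y) (hy : y ≤ 1 / 4) :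
    Summable fun n => (catalan n : ℝ) * y ^ n :=
  summable_catalan_div_four_pow.of_nonneg_of_le (fun n => by positivity)
    (catalan_mul_pow_le hy0 hy)

theorem tsum_catalan_mul_pow_le_two (hy0 : 0 ≤ y) (hy : y ≤ 1 / 4) :
    ∑' n, (catalan n : ℝ) * y ^ n ≤ 2 := by
  calc ∑' n, (catalan n : ℝ) * y ^ n ≤ ∑' n, (catalan n : ℝ) / 4 ^ n :=
        (summable_catalan_mul_pow hy0 hy).tsum_le_tsum (catalan_mul_pow_le hy0 hy)
          summable_catalan_div_four_pow
    _ ≤ 2 := summable_catalan_div_four_pow.tsum_le_of_sum_range_le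
          sum_range_catalan_div_four_pow_le_two

theorem sum_range_catalan_mul_pow_mul_catalan_mul_pow (n : ℕ) :
    ∑ k ∈ Finset.range (n + 1), (catalan k : ℝ) * y ^ k * (catalan (n - k) * y ^ (n - k))
      = catalan (n + 1) * y ^ n := by
  rw [catalan_succ', ← Finset.Nat.sum_antidiagonal_eq_sum_range_succ
    (fun i j => (catalan i : ℝ) * y ^ i * (catalan j * y ^ j))]
  push_cast
  rw [Finset.sum_mul]
  refine Finset.sum_congr rfl fun ij hij => ?_
  rw [← Finset.HasAntidiagonal.mem_antidiagonal.mp hij]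
  ring

theorem tsum_catalan_mul_pow_eq (hy0 : 0 ≤ y) (hy : y ≤ 1 / 4) :
    ∑' n, (catalan n : ℝ) * y ^ n = 1 + y * (∑' n, (catalan n : ℝ) * y ^ n) ^ 2 := by
  have hS := summable_catalan_mul_pow hy0 hy
  have hnorm : Summable fun n => ‖(catalan n : ℝ) * y ^ n‖ :=
    hS.congr fun n => (Real.norm_of_nonneg (by positivity)).symm
  rw [sq, tsum_mul_tsum_eq_tsum_sum_range_of_summable_norm hnorm hnorm, hS.tsum_eq_zero_add]
  simp only [sum_range_catalan_mul_pow_mul_catalan_mul_pow, catalan_zero]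
  rw [← tsum_mul_left]
  congr 1
  · simp
  · exact tsum_congr fun n => by ring

theorem hasSum_catalan_mul_pow (hy0 : 0 < y) (hy : y ≤ 1 / 4) :
    HasSum (fun n => (catalan n : ℝ) * y ^ n) ((1 - √(1 - 4 * y)) / (2 * y)) := by
  set C := ∑' n, (catalan n : ℝ) * y ^ n
  have hC : C = 1 + y * C ^ 2 := tsum_catalan_mul_pow_eq hy0.le hy
  have hC2 : C ≤ 2 := tsum_catalan_mul_pow_le_two hy0.le hy
  -- of the two roots of `y C² - C + 1 = 0`, the bound `C ≤ 2` selects the smaller one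
  have hroot : √(1 - 4 * y) = 1 - 2 * y * C := by
    rw [show 1 - 4 * y = (1 - 2 * y * C) ^ 2 by linear_combination 4 * y * hC]
    exact Real.sqrt_sq (by nlinarith)
  convert (summable_catalan_mul_pow hy0.le hy).hasSum using 1
  rw [hroot]
  field_simp
  ring

end CatalanSeries

theorem choose_two_mul_succ_div_eq_two_mul_catalan (k : ℕ) :
    ((2 * (k + 1)).choose (k + 1) : ℝ) / (2 * (k + 1) - 1) = 2 * catalan k := by
  have h : ((2 * (k + 1)).choose (k + 1) : ℝ) = 2 * (2 * k + 1) * catalan k := by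
    exact_mod_cast centralBinom_succ_eq_mul_catalan k
  have hk : (2 * (k : ℝ) + 1) ≠ 0 := by positivity
  rw [h, show 2 * ((k : ℝ) + 1) - 1 = 2 * k + 1 by ring]
  field_simp

theorem central_binomial_series_one (x : ℝ) (hx : x ∈ Set.Ioo (0 : ℝ) (1/2)) :
    HasSum (fun k : ℕ =>
        (Nat.choose (2 * (k + 1)) (k + 1) : ℝ) * x ^ (2 * (k + 1) - 1)
          / ((2 * (k + 1) : ℝ) - 1))
      ((4 * x ^ 2 + Real.sqrt (1 - 4 * x ^ 2) - 1)
        / (x * Real.sqrt (1 - 4 * x ^ 2))) := by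
  obtain ⟨hx0, hx1⟩ := hx
  have hcat := (hasSum_catalan_mul_pow (pow_pos hx0 2) (by nlinarith)).mul_left (2 * x)
  have hterm (k : ℕ) : (Nat.choose (2 * (k + 1)) (k + 1) : ℝ) * x ^ (2 * (k + 1) - 1)
      / ((2 * (k + 1) : ℝ) - 1) = 2 * x * ((catalan k : ℝ) * (x ^ 2) ^ k) := by
    rw [mul_div_right_comm, choose_two_mul_succ_div_eq_two_mul_catalan,
      show 2 * (k + 1) - 1 = 2 * k + 1 by omega]
    ring
  have hu : 0 < 1 - 4 * x ^ 2 := by nlinarith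
  have hs : 0 < √(1 - 4 * x ^ 2) := Real.sqrt_pos.mpr hu
  have hsq : √(1 - 4 * x ^ 2) ^ 2 = 1 - 4 * x ^ 2 := Real.sq_sqrt hu.le
  rw [show (4 * x ^ 2 + √(1 - 4 * x ^ 2) - 1) / (x * √(1 - 4 * x ^ 2))
      = 2 * x * ((1 - √(1 - 4 * x ^ 2)) / (2 * x ^ 2)) by
    field_simp
    linear_combination hsq]
  exact hcat.congr_fun hterm
end

section
/- For every x ∈ [0, 1/2], the series ∑_{k≥1} C(2k,k) x^{2k}/(2k−1)² converges to √(1−4x²) − 1 + 2x·arcsin(2x). In particular, at x = 1/2 it equals π/2 − 1. -/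
open Real Finset Topology Filter

noncomputable def cb (k : ℕ) : ℝ := (Nat.choose (2 * k) k : ℝ) / 4 ^ k

lemma cb_pos (k : ℕ) : 0 < cb k := by
  apply div_pos _ (by positivity)
  exact_mod_cast Nat.choose_pos (by omega)

lemma cb_zero : cb 0 = 1 := by simp [cb]

lemma cb_rec (k : ℕ) : (2 * (k : ℝ) + 2) * cb (k + 1) = (2 * k + 1) * cb k := by
  have h := Nat.succ_mul_centralBinom_succ k
  have h' : ((k + 1 : ℕ) : ℝ) * (Nat.choose (2 * (k+1)) (k+1) : ℝ)
      = 2 * (2 * k + 1) * (Nat.choose (2 * k) k : ℝ) := by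
    have := congrArg (fun n : ℕ => (n : ℝ)) h
    simpa [Nat.centralBinom, Nat.succ_eq_add_one] using this
  have h4 : (4 : ℝ) ^ (k + 1) ≠ 0 := by positivity
  simp only [cb]
  field_simp
  rw [pow_succ]
  push_cast at h' ⊢
  linear_combination (2 * (4:ℝ) ^ k) * h'

lemma cb_le_one (k : ℕ) : cb k ≤ 1 := by
  induction k with
  | zero => simp [cb_zero]
  | succ n ih =>
    have h := cb_rec n
    nlinarith [cb_pos n, cb_pos (n + 1)]

lemma cb_reflect (m : ℕ) :
    2 * ∑ k ∈ range (m + 1), (k : ℝ) * (cb k * cb (m - k))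
      = m * ∑ k ∈ range (m + 1), cb k * cb (m - k) := by
  have h1 : ∑ k ∈ range (m + 1), ((m : ℝ) - k) * (cb k * cb (m - k))
      = ∑ k ∈ range (m + 1), (k : ℝ) * (cb k * cb (m - k)) := by
    rw [← Finset.sum_range_reflect (fun k => (k : ℝ) * (cb k * cb (m - k))) (m + 1)]
    refine Finset.sum_congr rfl fun j hj => ?_
    have hjm : j ≤ m := by simpa [Nat.lt_succ_iff] using hj
    have h2 : m + 1 - 1 - j = m - j := by omega
    have h3 : m - (m - j) = j := by omega
    rw [h2, h3, Nat.cast_sub hjm, mul_comm (cb (m - j)) (cb j)]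
  calc 2 * ∑ k ∈ range (m + 1), (k : ℝ) * (cb k * cb (m - k))
      = ∑ k ∈ range (m + 1), (k : ℝ) * (cb k * cb (m - k))
        + ∑ k ∈ range (m + 1), ((m : ℝ) - k) * (cb k * cb (m - k)) := by rw [h1]; ring
    _ = ∑ k ∈ range (m + 1), (m : ℝ) * (cb k * cb (m - k)) := by
        rw [← Finset.sum_add_distrib]; exact Finset.sum_congr rfl fun k _ => by ring
    _ = m * ∑ k ∈ range (m + 1), cb k * cb (m - k) := by rw [Finset.mul_sum]

lemma cb_conv (n : ℕ) : ∑ k ∈ range (n + 1), cb k * cb (n - k) = 1 := by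
  induction n with
  | zero => simp [cb_zero]
  | succ n ih =>
    have hS : ∑ k ∈ range (n + 2), (k : ℝ) * (cb k * cb (n + 1 - k))
        = ∑ j ∈ range (n + 1), ((j : ℝ) + 1) * (cb (j + 1) * cb (n - j)) := by
      rw [Finset.sum_range_succ' (fun k => (k : ℝ) * (cb k * cb (n + 1 - k))) (n + 1)]
      simp
    have hterm : ∀ j : ℕ, ((j : ℝ) + 1) * (cb (j + 1) * cb (n - j))
        = ((j : ℝ) + 1/2) * (cb j * cb (n - j)) := by
      intro j
      have h := cb_rec j
      nlinarith [cb_pos (n - j)]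
    have hS2 : ∑ k ∈ range (n + 2), (k : ℝ) * (cb k * cb (n + 1 - k))
        = ∑ j ∈ range (n + 1), (j : ℝ) * (cb j * cb (n - j))
          + (1/2) * ∑ j ∈ range (n + 1), cb j * cb (n - j) := by
      rw [hS, Finset.mul_sum, ← Finset.sum_add_distrib]
      exact Finset.sum_congr rfl fun j _ => by rw [hterm]; ring
    have h1 := cb_reflect (n + 1)
    have h2 := cb_reflect n
    rw [ih] at h2
    rw [hS2, ih] at h1
    push_cast at h1
    have hn : ((n : ℝ) + 1) ≠ 0 := by positivity
    have : ((n : ℝ) + 1) * ∑ k ∈ range (n + 1 + 1), cb k * cb (n + 1 - k)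
        = ((n : ℝ) + 1) * 1 := by linarith
    field_simp at this
    linarith [this]

lemma cb_summable {u : ℝ} (hu0 : 0 ≤ u) (hu1 : u < 1) :
    Summable (fun k : ℕ => cb k * u ^ k) := by
  apply Summable.of_nonneg_of_le
    (fun k => mul_nonneg (cb_pos k).le (pow_nonneg hu0 k)) (fun k => ?_)
    (summable_geometric_of_lt_one hu0 hu1)
  calc cb k * u ^ k ≤ 1 * u ^ k := by
        apply mul_le_mul_of_nonneg_right (cb_le_one k) (by positivity)
    _ = u ^ k := one_mul _

lemma hasSum_cb_inv_sqrt {u : ℝ} (hu0 : 0 ≤ u) (hu1 : u < 1) :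
    HasSum (fun k : ℕ => cb k * u ^ k) (1 / Real.sqrt (1 - u)) := by
  have hsum := cb_summable hu0 hu1
  have hnorm : Summable (fun k : ℕ => ‖cb k * u ^ k‖) := by
    have heq : ∀ k : ℕ, ‖cb k * u ^ k‖ = cb k * u ^ k := fun k => by
      rw [Real.norm_eq_abs, abs_of_nonneg (mul_nonneg (cb_pos k).le (pow_nonneg hu0 k))]
    simp only [heq]; exact hsum
  set S := ∑' k : ℕ, cb k * u ^ k with hSdef
  have hS0 : 0 ≤ S := tsum_nonneg fun k => mul_nonneg (cb_pos k).le (pow_nonneg hu0 k)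
  have hmul : S * S = (1 - u)⁻¹ := by
    rw [hSdef, tsum_mul_tsum_eq_tsum_sum_range_of_summable_norm hnorm hnorm]
    have : ∀ n : ℕ, ∑ k ∈ range (n + 1), cb k * u ^ k * (cb (n - k) * u ^ (n - k))
        = u ^ n := by
      intro n
      have : ∀ k ∈ range (n + 1), cb k * u ^ k * (cb (n - k) * u ^ (n - k))
          = cb k * cb (n - k) * u ^ n := by
        intro k hk
        have hkn : k ≤ n := by simpa [Nat.lt_succ_iff] using hk
        rw [show cb k * u ^ k * (cb (n - k) * u ^ (n - k))
            = cb k * cb (n - k) * (u ^ k * u ^ (n - k)) from by ring,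
          ← pow_add, Nat.add_sub_cancel' hkn]
      rw [Finset.sum_congr rfl this, ← Finset.sum_mul, cb_conv, one_mul]
    rw [tsum_congr this, tsum_geometric_of_lt_one hu0 hu1]
  have h1u : 0 < 1 - u := by linarith
  have hSvalue : S = 1 / Real.sqrt (1 - u) := by
    have hsq : Real.sqrt (S * S) = Real.sqrt ((1 - u)⁻¹) := by rw [hmul]
    rw [Real.sqrt_mul_self hS0, Real.sqrt_inv] at hsq
    rw [hsq, one_div]
  rw [← hSvalue]
  exact hsum.hasSum

lemma integrable_inv_sqrt_one_sub_sq {y : ℝ} (hy0 : 0 ≤ y) (hy1 : y < 1) :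
    IntervalIntegrable (fun t : ℝ => 1 / Real.sqrt (1 - t ^ 2)) MeasureTheory.volume 0 y := by
  apply ContinuousOn.intervalIntegrable
  apply ContinuousOn.div continuousOn_const
  · exact (Real.continuous_sqrt.comp (by continuity)).continuousOn
  · intro t ht
    rw [Set.uIcc_of_le hy0] at ht
    have h1 : 1 - t ^ 2 > 0 := by nlinarith [ht.1, ht.2]
    positivity

lemma hasSum_arcsin_series {y : ℝ} (hy0 : 0 ≤ y) (hy1 : y < 1) :
    HasSum (fun k : ℕ => cb k * y ^ (2 * k + 1) / (2 * k + 1)) (Real.arcsin y) := by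
  have hy2 : y ^ 2 < 1 := by nlinarith
  have key : HasSum (fun k : ℕ => ∫ t in (0:ℝ)..y, cb k * t ^ (2 * k))
      (∫ t in (0:ℝ)..y, 1 / Real.sqrt (1 - t ^ 2)) := by
    apply intervalIntegral.hasSum_integral_of_dominated_convergence
      (bound := fun k _ => cb k * y ^ (2 * k))
    · intro n
      exact (Continuous.aestronglyMeasurable (by continuity))
    · intro n
      filter_upwards with t ht
      rw [Set.uIoc_of_le hy0] at ht
      have h1 : |t| ≤ y := by rw [abs_of_pos ht.1]; exact ht.2
      rw [Real.norm_eq_abs, abs_mul, abs_of_pos (cb_pos n), abs_pow]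
      exact mul_le_mul_of_nonneg_left (pow_le_pow_left₀ (abs_nonneg t) h1 _) (cb_pos n).le
    · filter_upwards with t _
      have := cb_summable (by positivity : (0:ℝ) ≤ y ^ 2) hy2
      simpa [pow_mul] using this
    · exact intervalIntegrable_const
    · filter_upwards with t ht
      rw [Set.uIoc_of_le hy0] at ht
      have h0 : 0 ≤ t ^ 2 := sq_nonneg t
      have h1 : t ^ 2 < 1 := by nlinarith [ht.1, ht.2]
      have := hasSum_cb_inv_sqrt h0 h1
      simpa [pow_mul] using this
  have hint1 : ∀ k : ℕ, (∫ t in (0:ℝ)..y, cb k * t ^ (2 * k))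
      = cb k * y ^ (2 * k + 1) / (2 * k + 1) := by
    intro k
    rw [intervalIntegral.integral_const_mul, integral_pow]
    push_cast
    rw [zero_pow (by omega)]
    ring
  have hint2 : (∫ t in (0:ℝ)..y, 1 / Real.sqrt (1 - t ^ 2)) = Real.arcsin y := by
    rw [intervalIntegral.integral_eq_sub_of_hasDerivAt (f := Real.arcsin)
      (fun t ht => ?_) (integrable_inv_sqrt_one_sub_sq hy0 hy1)]
    · rw [Real.arcsin_zero, sub_zero]
    · rw [Set.uIcc_of_le hy0] at ht
      exact Real.hasDerivAt_arcsin (by linarith [ht.1]) (by linarith [ht.2])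
  rw [hint2] at key
  exact key.congr_fun fun k => (hint1 k).symm

lemma g_hasDeriv {t : ℝ} (ht : 1 - 4 * t ^ 2 > 0) :
    HasDerivAt (fun s : ℝ => Real.sqrt (1 - 4 * s ^ 2) - 1 + 2 * s * Real.arcsin (2 * s))
      (2 * Real.arcsin (2 * t)) t := by
  have h2t1 : (2 * t) ≠ -1 := by
    intro h
    have : t = -(1/2) := by linarith
    rw [this] at ht; norm_num at ht
  have h2t2 : (2 * t) ≠ 1 := by
    intro h
    have : t = 1/2 := by linarith
    rw [this] at ht; norm_num at ht
  have hp : HasDerivAt (fun s : ℝ => 1 - 4 * s ^ 2) (-(8 * t)) t := by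
    have := ((hasDerivAt_pow 2 t).const_mul (4 : ℝ)).const_sub 1
    simpa using this.congr_deriv (by ring)
  have hsqrt : HasDerivAt (fun s : ℝ => Real.sqrt (1 - 4 * s ^ 2))
      (-(8 * t) / (2 * Real.sqrt (1 - 4 * t ^ 2))) t := hp.sqrt (ne_of_gt ht)
  have hlin : HasDerivAt (fun s : ℝ => 2 * s) 2 t := by
    simpa using (hasDerivAt_id t).const_mul (2 : ℝ)
  have harc : HasDerivAt (fun s : ℝ => Real.arcsin (2 * s))
      (1 / Real.sqrt (1 - (2 * t) ^ 2) * 2) t :=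
    (Real.hasDerivAt_arcsin h2t1 h2t2).comp t hlin
  have hmul : HasDerivAt (fun s : ℝ => 2 * s * Real.arcsin (2 * s))
      (2 * Real.arcsin (2 * t) + 2 * t * (1 / Real.sqrt (1 - (2 * t) ^ 2) * 2)) t :=
    hlin.mul harc
  have total := (hsqrt.sub_const 1).add hmul
  have hs : Real.sqrt (1 - (2 * t) ^ 2) = Real.sqrt (1 - 4 * t ^ 2) := by ring_nf
  have hsne : Real.sqrt (1 - 4 * t ^ 2) ≠ 0 := by positivity
  refine total.congr_deriv ?_
  rw [hs]
  field_simp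
  ring

lemma hasSum_interior {x : ℝ} (hx0 : 0 ≤ x) (hx1 : x < 1 / 2) :
    HasSum (fun k : ℕ => cb k * 2 ^ (2 * k + 2) * x ^ (2 * k + 2)
        / ((2 * k + 1) * (2 * k + 2)))
      (Real.sqrt (1 - 4 * x ^ 2) - 1 + 2 * x * Real.arcsin (2 * x)) := by
  have h2x : 2 * x < 1 := by linarith
  have h2x0 : 0 ≤ 2 * x := by linarith
  have hgeo : Summable (fun k : ℕ => 2 * (2 * x) ^ (2 * k + 1)) := by
    have hs : Summable (fun k : ℕ => ((2 * x) ^ 2) ^ k) :=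
      summable_geometric_of_lt_one (by positivity) (by nlinarith)
    exact (hs.mul_left (2 * (2 * x))).congr fun k => by
      rw [pow_succ (2 * x) (2 * k), pow_mul]; ring
  have key : HasSum (fun k : ℕ => ∫ t in (0:ℝ)..x, 2 * (cb k * (2*t) ^ (2*k+1) / (2*k+1)))
      (∫ t in (0:ℝ)..x, 2 * Real.arcsin (2 * t)) := by
    apply intervalIntegral.hasSum_integral_of_dominated_convergence
      (bound := fun k _ => 2 * (cb k * (2*x) ^ (2*k+1) / (2*k+1)))
    · intro n
      exact (Continuous.aestronglyMeasurable (by continuity))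
    · intro n
      filter_upwards with t ht
      rw [Set.uIoc_of_le hx0] at ht
      have ht0 : 0 ≤ 2 * t := by linarith [ht.1]
      have hd : (0:ℝ) < 2 * n + 1 := by positivity
      have hF : 0 ≤ 2 * (cb n * (2*t) ^ (2*n+1) / (2*n+1)) := by
        apply mul_nonneg (by norm_num)
        exact div_nonneg (mul_nonneg (cb_pos n).le (by positivity)) hd.le
      rw [Real.norm_eq_abs, abs_of_nonneg hF]
      gcongr
      · exact (cb_pos n).le
      · linarith [ht.2]
    · filter_upwards with t _
      apply Summable.of_nonneg_of_le _ _ hgeo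
      · intro k
        exact mul_nonneg (by norm_num)
          (div_nonneg (mul_nonneg (cb_pos k).le (by positivity)) (by positivity))
      · intro k
        have hA : (0:ℝ) ≤ (2 * x) ^ (2 * k + 1) := by positivity
        have h1 : cb k * (2*x) ^ (2*k+1) / (2*k+1) ≤ cb k * (2*x) ^ (2*k+1) :=
          div_le_self (mul_nonneg (cb_pos k).le hA) (by push_cast; linarith [Nat.cast_nonneg (α := ℝ) k])
        have h2 : cb k * (2*x) ^ (2*k+1) ≤ (2*x) ^ (2*k+1) := by
          nlinarith [cb_le_one k, cb_pos k, hA]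
        linarith
    · exact intervalIntegrable_const
    · filter_upwards with t ht
      rw [Set.uIoc_of_le hx0] at ht
      exact (hasSum_arcsin_series (by linarith [ht.1]) (by linarith [ht.2])).mul_left 2
  have hint1 : ∀ k : ℕ, (∫ t in (0:ℝ)..x, 2 * (cb k * (2*t) ^ (2*k+1) / (2*k+1)))
      = cb k * 2 ^ (2 * k + 2) * x ^ (2 * k + 2) / ((2 * k + 1) * (2 * k + 2)) := by
    intro k
    have heq : ∀ t : ℝ, 2 * (cb k * (2*t) ^ (2*k+1) / (2*k+1))
        = (2 * (cb k * 2 ^ (2*k+1) / (2*k+1))) * t ^ (2*k+1) := by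
      intro t; rw [mul_pow]; ring
    rw [intervalIntegral.integral_congr (fun t _ => heq t),
      intervalIntegral.integral_const_mul, integral_pow]
    have hd1 : ((2:ℝ) * k + 1) ≠ 0 := by positivity
    have hd2 : ((2:ℝ) * k + 2) ≠ 0 := by positivity
    push_cast
    rw [zero_pow (by omega)]
    field_simp
    ring
  have hint2 : (∫ t in (0:ℝ)..x, 2 * Real.arcsin (2 * t))
      = Real.sqrt (1 - 4 * x ^ 2) - 1 + 2 * x * Real.arcsin (2 * x) := by
    have hderiv : ∀ t ∈ Set.uIcc (0:ℝ) x,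
        HasDerivAt (fun s : ℝ => Real.sqrt (1 - 4 * s ^ 2) - 1 + 2 * s * Real.arcsin (2 * s))
          (2 * Real.arcsin (2 * t)) t := by
      intro t ht
      rw [Set.uIcc_of_le hx0] at ht
      exact g_hasDeriv (by nlinarith [ht.1, ht.2])
    have hintg : IntervalIntegrable (fun t : ℝ => 2 * Real.arcsin (2 * t))
        MeasureTheory.volume 0 x :=
      Continuous.intervalIntegrable (by continuity) 0 x
    rw [intervalIntegral.integral_eq_sub_of_hasDerivAt hderiv hintg]
    simp [Real.arcsin_zero]
  rw [hint2] at key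
  exact key.congr_fun fun k => (hint1 k).symm

lemma termEq (k : ℕ) (x : ℝ) :
    (Nat.choose (2 * (k + 1)) (k + 1) : ℝ) * x ^ (2 * (k + 1)) / ((2 * (k + 1) : ℝ) - 1) ^ 2
      = cb k * 2 ^ (2 * k + 2) * x ^ (2 * k + 2) / ((2 * k + 1) * (2 * k + 2)) := by
  have hrec := cb_rec k
  have h2 : ((2:ℝ) * k + 2) ≠ 0 := by positivity
  have hcb : cb (k + 1) = (2 * (k:ℝ) + 1) * cb k / (2 * k + 2) := by
    field_simp
    linarith [hrec]
  have hch : (Nat.choose (2 * (k + 1)) (k + 1) : ℝ) = cb (k + 1) * 4 ^ (k + 1) := by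
    rw [cb]; field_simp
  rw [hch, hcb]
  have h4 : (4:ℝ) ^ (k + 1) = 2 ^ (2 * k + 2) := by
    rw [show (4:ℝ) = 2 ^ 2 by norm_num, ← pow_mul]
    ring_nf
  have hexp : 2 * (k + 1) = 2 * k + 2 := by ring
  rw [hexp, h4]
  have h1 : ((2:ℝ) * k + 1) ≠ 0 := by positivity
  have h3 : ((2 * ((k:ℝ) + 1)) - 1) = 2 * k + 1 := by ring
  push_cast
  rw [h3]
  field_simp

noncomputable def fterm (k : ℕ) (x : ℝ) : ℝ :=
  cb k * 2 ^ (2 * k + 2) * x ^ (2 * k + 2) / ((2 * k + 1) * (2 * k + 2))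

lemma fterm_bound {k : ℕ} {x : ℝ} (hx : x ∈ Set.Icc (0:ℝ) (1/2)) :
    ‖fterm k x‖ ≤ cb k / ((2 * k + 1) * (2 * k + 2)) := by
  have hd : (0:ℝ) < (2 * k + 1) * (2 * k + 2) := by positivity
  have hx0 := hx.1
  have hx1 := hx.2
  have hpow : (2:ℝ) ^ (2 * k + 2) * x ^ (2 * k + 2) ≤ 1 := by
    rw [← mul_pow]
    calc (2 * x) ^ (2 * k + 2) ≤ 1 ^ (2 * k + 2) := by
          apply pow_le_pow_left₀ (by linarith) (by linarith)
      _ = 1 := one_pow _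
  have hnn : 0 ≤ fterm k x := by
    apply div_nonneg _ hd.le
    exact mul_nonneg (mul_nonneg (cb_pos k).le (by positivity)) (by positivity)
  rw [Real.norm_eq_abs, abs_of_nonneg hnn, fterm]
  have hnum : cb k * 2 ^ (2 * k + 2) * x ^ (2 * k + 2) ≤ cb k := by
    calc cb k * 2 ^ (2 * k + 2) * x ^ (2 * k + 2)
        = cb k * (2 ^ (2 * k + 2) * x ^ (2 * k + 2)) := by ring
      _ ≤ cb k * 1 := mul_le_mul_of_nonneg_left hpow (cb_pos k).le
      _ = cb k := mul_one _
  gcongr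

lemma summable_bound : Summable (fun k : ℕ => cb k / ((2 * (k:ℝ) + 1) * (2 * k + 2))) := by
  have hs : Summable (fun k : ℕ => 1 / ((k:ℝ) + 1) ^ 2) := by
    have h := Real.summable_one_div_nat_pow.mpr (by norm_num : 1 < 2)
    have := (summable_nat_add_iff 1).mpr h
    exact this.congr fun k => by push_cast; ring
  apply Summable.of_nonneg_of_le _ _ hs
  · intro k
    exact div_nonneg (cb_pos k).le (by positivity)
  · intro k
    have hd : (0:ℝ) < (2 * k + 1) * (2 * k + 2) := by positivity
    rw [div_le_div_iff₀ hd (by positivity)]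
    have h1 : ((k:ℝ) + 1) ^ 2 ≤ (2 * k + 1) * (2 * k + 2) := by nlinarith [Nat.cast_nonneg (α := ℝ) k]
    nlinarith [cb_le_one k, cb_pos k, Nat.cast_nonneg (α := ℝ) k]

lemma fterm_continuous (k : ℕ) : Continuous (fun x : ℝ => fterm k x) := by
  unfold fterm; continuity

lemma summable_fterm {x : ℝ} (hx : x ∈ Set.Icc (0:ℝ) (1/2)) :
    Summable (fun k : ℕ => fterm k x) :=
  Summable.of_norm_bounded summable_bound (fun k => fterm_bound hx)

lemma hasSum_fterm {x : ℝ} (hx : x ∈ Set.Icc (0:ℝ) (1/2)) :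
    HasSum (fun k : ℕ => fterm k x)
      (Real.sqrt (1 - 4 * x ^ 2) - 1 + 2 * x * Real.arcsin (2 * x)) := by
  have hint : ∀ y : ℝ, 0 ≤ y → y < 1/2 → HasSum (fun k : ℕ => fterm k y)
      (Real.sqrt (1 - 4 * y ^ 2) - 1 + 2 * y * Real.arcsin (2 * y)) := by
    intro y hy0 hy1
    simpa [fterm] using hasSum_interior hy0 hy1
  rcases lt_or_eq_of_le hx.2 with hlt | heq
  · exact hint x hx.1 hlt
  · subst heq
    have hgc : Continuous
        (fun y : ℝ => Real.sqrt (1 - 4 * y ^ 2) - 1 + 2 * y * Real.arcsin (2 * y)) := by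
      apply Continuous.add
      · apply Continuous.sub _ continuous_const
        exact Real.continuous_sqrt.comp (by continuity)
      · exact (continuous_const.mul continuous_id).mul
          (Real.continuous_arcsin.comp (by continuity))
    have hcont : ContinuousOn (fun y : ℝ => ∑' k : ℕ, fterm k y) (Set.Icc (0:ℝ) (1/2)) :=
      continuousOn_tsum (fun k => (fterm_continuous k).continuousOn) summable_bound
        (fun k y hy => fterm_bound hy)
    have hmem : (1/2 : ℝ) ∈ Set.Icc (0:ℝ) (1/2) := by norm_num
    have hne : (𝓝[Set.Ico (0:ℝ) (1/2)] (1/2)).NeBot := by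
      apply mem_closure_iff_nhdsWithin_neBot.mp
      rw [closure_Ico (by norm_num : (0:ℝ) ≠ 1/2)]
      exact hmem
    have t1 : Filter.Tendsto (fun y : ℝ => ∑' k : ℕ, fterm k y)
        (𝓝[Set.Ico (0:ℝ) (1/2)] (1/2)) (𝓝 (∑' k : ℕ, fterm k (1/2 : ℝ))) :=
      (hcont (1/2) hmem).mono_left (nhdsWithin_mono _ Set.Ico_subset_Icc_self)
    have t2 : Filter.Tendsto (fun y : ℝ => ∑' k : ℕ, fterm k y)
        (𝓝[Set.Ico (0:ℝ) (1/2)] (1/2))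
        (𝓝 (Real.sqrt (1 - 4 * (1/2:ℝ) ^ 2) - 1
          + 2 * (1/2:ℝ) * Real.arcsin (2 * (1/2:ℝ)))) := by
      have hgt := (hgc.tendsto (1/2)).mono_left
        (nhdsWithin_le_nhds (s := Set.Ico (0:ℝ) (1/2)))
      apply hgt.congr'
      filter_upwards [self_mem_nhdsWithin] with y hy
      exact ((hint y hy.1 hy.2).tsum_eq).symm
    have hval := tendsto_nhds_unique t1 t2
    have hs := (summable_fterm hmem).hasSum
    rw [hval] at hs
    exact hs
theorem central_binomial_series_two (x : ℝ) (hx : x ∈ Set.Icc (0 : ℝ) (1/2)) :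
    HasSum (fun k : ℕ =>
        (Nat.choose (2 * (k + 1)) (k + 1) : ℝ) * x ^ (2 * (k + 1))
          / ((2 * (k + 1) : ℝ) - 1) ^ 2)
      (Real.sqrt (1 - 4 * x ^ 2) - 1 + 2 * x * Real.arcsin (2 * x))
    ∧ Real.sqrt (1 - 4 * ((1:ℝ)/2) ^ 2) - 1
        + 2 * ((1:ℝ)/2) * Real.arcsin (2 * ((1:ℝ)/2)) = π / 2 - 1 := by
  constructor
  · exact (hasSum_fterm hx).congr_fun fun k => by
      rw [termEq k x]; simp [fterm]
  · have h0 : (1:ℝ) - 4 * ((1:ℝ)/2) ^ 2 = 0 := by norm_num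
    rw [h0, Real.sqrt_zero]
    norm_num [Real.arcsin_one]
    ring
end

section
/- Let H_n be defined by H_0 = 1 and H_{n+1}(η) = η·H_n(η) − 2H_n'(η). Then for every k ≥ 1, ∫_0^∞ H_2(η) H_{2k+1}(η) e^{−η²/4} dη = −4·(−1)^k·2^k·(2k+1)·(2k−3)!!. -/
open Polynomial Real

/-- Hermite-type polynomials: `H 0 = 1`, `H (n+1) = X * H n - 2 * (H n)'`. -/
noncomputable def hermiteH : ℕ → Polynomial ℝ
  | 0 => 1
  | n + 1 => Polynomial.X * hermiteH n - 2 * Polynomial.derivative (hermiteH n)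

lemma hermiteH_succ (n : ℕ) :
    hermiteH (n + 1)
      = Polynomial.X * hermiteH n - Polynomial.C 2 * Polynomial.derivative (hermiteH n) := by
  show Polynomial.X * hermiteH n - 2 * Polynomial.derivative (hermiteH n) = _
  rw [map_ofNat]

lemma derivative_hermiteH : ∀ n : ℕ,
    Polynomial.derivative (hermiteH (n + 1)) = Polynomial.C ((n : ℝ) + 1) * hermiteH n
  | 0 => by
    simp [hermiteH]
  | (n + 1) => by
    have IH := derivative_hermiteH n
    rw [hermiteH_succ (n + 1), IH]
    simp only [derivative_sub, derivative_mul, derivative_X, derivative_C, IH]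
    rw [hermiteH_succ n]
    push_cast
    simp only [C_add, C_1]
    ring

lemma X_mul_hermiteH (n : ℕ) :
    Polynomial.X * hermiteH (n + 1)
      = hermiteH (n + 2) + Polynomial.C (2 * (n : ℝ) + 2) * hermiteH n := by
  rw [hermiteH_succ (n + 1), derivative_hermiteH]
  simp only [C_add, C_mul, C_1, map_ofNat]
  ring

lemma hermiteH_two : hermiteH 2 = Polynomial.X ^ 2 - Polynomial.C 2 := by
  have h0 : hermiteH 0 = 1 := rfl
  rw [hermiteH_succ 1, hermiteH_succ 0, h0]
  simp [map_ofNat]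
  ring

lemma H2_mul (n : ℕ) :
    hermiteH 2 * hermiteH (n + 2)
      = hermiteH (n + 4) + Polynomial.C (4 * (n : ℝ) + 8) * hermiteH (n + 2)
        + Polynomial.C ((2 * (n : ℝ) + 4) * (2 * (n : ℝ) + 2)) * hermiteH n := by
  have r0 := X_mul_hermiteH n
  have r1 := X_mul_hermiteH (n + 1)
  have r2 := X_mul_hermiteH (n + 2)
  push_cast at r1 r2
  norm_num at r1 r2
  rw [hermiteH_two]
  simp only [C_add, C_mul, C_1, map_ofNat, Polynomial.C_eq_natCast] at r0 r1 r2 ⊢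
  linear_combination (Polynomial.X : Polynomial ℝ) * r1 + r2
    + (2 * ((n : ℕ) : Polynomial ℝ) + 4) * r0

lemma dfac_step (n : ℕ) :
    (Nat.doubleFactorial (2 * n + 1) : ℝ)
      = (2 * (n : ℝ) + 1) * (Nat.doubleFactorial (2 * n - 1) : ℝ) := by
  rcases n with _ | p
  · norm_num [Nat.doubleFactorial]
  · have e1 : 2 * (p + 1) + 1 = (2 * p + 1) + 2 := by omega
    have e2 : 2 * (p + 1) - 1 = 2 * p + 1 := by omega
    rw [e1, e2, Nat.doubleFactorial_add_two]
    push_cast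
    ring

lemma eval_zero_hermiteH_even :
    ∀ m : ℕ, (hermiteH (2 * m)).eval 0 = (-2) ^ m * (Nat.doubleFactorial (2 * m - 1) : ℝ)
  | 0 => by
    simp [hermiteH, Nat.doubleFactorial]
  | (m + 1) => by
    have IH := eval_zero_hermiteH_even m
    have h1 : 2 * (m + 1) = (2 * m) + 2 := by ring
    have h2 := X_mul_hermiteH (2 * m)
    have h3 : (hermiteH (2 * m + 2)).eval 0
        = -(4 * (m : ℝ) + 2) * (hermiteH (2 * m)).eval 0 := by
      have h := congrArg (Polynomial.eval (0 : ℝ)) h2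
      simp only [eval_mul, eval_X, eval_add, eval_C, zero_mul] at h
      push_cast at h
      linarith
    rw [h1, h3, IH, show 2 * m + 2 - 1 = 2 * m + 1 from by omega, dfac_step m]
    ring

lemma integrableOn_poly_gauss (P : Polynomial ℝ) :
    MeasureTheory.IntegrableOn (fun x => P.eval x * Real.exp (-x ^ 2 / 4)) (Set.Ioi (0:ℝ)) := by
  have h : ∀ n : ℕ, MeasureTheory.IntegrableOn
      (fun x : ℝ => x ^ n * Real.exp (-x ^ 2 / 4)) (Set.Ioi (0:ℝ)) := by
    intro n
    have hn : (-1 : ℝ) < (n : ℝ) := by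
      have := Nat.cast_nonneg (α := ℝ) n
      linarith
    have h0 := integrableOn_rpow_mul_exp_neg_mul_sq (b := 1/4) (by norm_num) hn
    apply h0.congr_fun ?_ measurableSet_Ioi
    intro x _
    show x ^ (n : ℝ) * Real.exp (-(1/4) * x ^ 2) = x ^ n * Real.exp (-x ^ 2 / 4)
    rw [Real.rpow_natCast, show -(1/4 : ℝ) * x ^ 2 = -x ^ 2 / 4 from by ring]
  have heq : (fun x => P.eval x * Real.exp (-x ^ 2 / 4))
      = fun x => ∑ i ∈ Finset.range (P.natDegree + 1),
          P.coeff i * (x ^ i * Real.exp (-x ^ 2 / 4)) := by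
    funext x
    rw [Polynomial.eval_eq_sum_range, Finset.sum_mul]
    simp [mul_assoc]
  rw [MeasureTheory.IntegrableOn, heq]
  exact MeasureTheory.integrable_finset_sum _ (fun i _ => ((h i).const_mul _))

lemma tendsto_poly_gauss (P : Polynomial ℝ) :
    Filter.Tendsto (fun x => P.eval x * Real.exp (-x ^ 2 / 4)) Filter.atTop (nhds 0) := by
  apply squeeze_zero_norm (a := fun x => Real.exp 1 * |P.eval x / Real.exp x|)
  · intro x
    have hb : Real.exp (-x ^ 2 / 4) ≤ Real.exp 1 * Real.exp (-x) := by
      rw [← Real.exp_add]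
      apply Real.exp_le_exp.2
      nlinarith [sq_nonneg (x - 2)]
    have hnorm : ‖P.eval x * Real.exp (-x ^ 2 / 4)‖ = |P.eval x| * Real.exp (-x ^ 2 / 4) := by
      rw [norm_mul, Real.norm_eq_abs, Real.norm_eq_abs, Real.abs_exp]
    rw [hnorm, abs_div, Real.abs_exp]
    calc |P.eval x| * Real.exp (-x ^ 2 / 4) ≤ |P.eval x| * (Real.exp 1 * Real.exp (-x)) :=
          mul_le_mul_of_nonneg_left hb (abs_nonneg _)
      _ = Real.exp 1 * (|P.eval x| / Real.exp x) := by
          rw [Real.exp_neg]; field_simp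
  · have h := (P.tendsto_div_exp_atTop).abs
    simpa using h.const_mul (Real.exp 1)

lemma integral_hermiteH_gauss (n : ℕ) :
    ∫ η in Set.Ioi (0:ℝ), (hermiteH (n + 1)).eval η * Real.exp (-η ^ 2 / 4)
      = 2 * (hermiteH n).eval 0 := by
  have hderiv : ∀ x ∈ Set.Ici (0:ℝ),
      HasDerivAt (fun x => -2 * (hermiteH n).eval x * Real.exp (-x ^ 2 / 4))
        ((hermiteH (n + 1)).eval x * Real.exp (-x ^ 2 / 4)) x := by
    intro x _
    have h1 : HasDerivAt (fun x : ℝ => (hermiteH n).eval x)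
        ((Polynomial.derivative (hermiteH n)).eval x) x := (hermiteH n).hasDerivAt x
    have h2 : HasDerivAt (fun x : ℝ => -x ^ 2 / 4) (-x / 2) x := by
      have := ((hasDerivAt_pow 2 x).neg.div_const 4)
      refine this.congr_deriv ?_
      norm_num
      ring
    have h3 : HasDerivAt (fun x : ℝ => Real.exp (-x ^ 2 / 4))
        (Real.exp (-x ^ 2 / 4) * (-x / 2)) x := h2.exp
    have h4 := ((h1.const_mul (-2:ℝ)).mul h3)
    refine h4.congr_deriv ?_
    have heval : (hermiteH (n + 1)).eval x
        = x * (hermiteH n).eval x - 2 * (Polynomial.derivative (hermiteH n)).eval x := by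
      rw [hermiteH_succ]; simp
    rw [heval]
    ring
  have hint : MeasureTheory.IntegrableOn
      (fun x => (hermiteH (n + 1)).eval x * Real.exp (-x ^ 2 / 4)) (Set.Ioi (0:ℝ)) :=
    integrableOn_poly_gauss _
  have htend : Filter.Tendsto (fun x => -2 * (hermiteH n).eval x * Real.exp (-x ^ 2 / 4))
      Filter.atTop (nhds 0) := by
    have h := (tendsto_poly_gauss (hermiteH n)).const_mul (-2 : ℝ)
    simpa [mul_assoc] using h
  have := MeasureTheory.integral_Ioi_of_hasDerivAt_of_tendsto' hderiv hint htend
  rw [this]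
  norm_num

theorem integral_H2_H_odd (k : ℕ) (hk : 1 ≤ k) :
    ∫ η in Set.Ioi (0:ℝ),
        (hermiteH 2).eval η * (hermiteH (2 * k + 1)).eval η * Real.exp (-η ^ 2 / 4)
      = -4 * (-1) ^ k * 2 ^ k * (2 * k + 1) * (Nat.doubleFactorial (2 * k - 3) : ℝ) := by
  obtain ⟨j, rfl⟩ : ∃ j, k = j + 1 := ⟨k - 1, by omega⟩
  have hidx : 2 * (j + 1) + 1 = (2 * j + 1) + 2 := by ring
  rw [hidx]
  have hprod := H2_mul (2 * j + 1)
  have hintegrand : ∀ η : ℝ,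
      (hermiteH 2).eval η * (hermiteH (2 * j + 1 + 2)).eval η * Real.exp (-η ^ 2 / 4)
      = (hermiteH (2 * j + 1 + 4)).eval η * Real.exp (-η ^ 2 / 4)
        + (8 * (j : ℝ) + 12) * ((hermiteH (2 * j + 1 + 2)).eval η * Real.exp (-η ^ 2 / 4))
        + ((4 * (j : ℝ) + 6) * (4 * (j : ℝ) + 4))
            * ((hermiteH (2 * j + 1)).eval η * Real.exp (-η ^ 2 / 4)) := by
    intro η
    have h := congrArg (Polynomial.eval η) hprod
    simp only [eval_mul, eval_add, eval_C] at h
    push_cast at h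
    rw [h]
    ring
  rw [MeasureTheory.setIntegral_congr_fun measurableSet_Ioi (fun η _ => hintegrand η)]
  have i1 : MeasureTheory.IntegrableOn
      (fun η => (hermiteH (2 * j + 1 + 4)).eval η * Real.exp (-η ^ 2 / 4)) (Set.Ioi (0:ℝ)) :=
    integrableOn_poly_gauss _
  have i2 : MeasureTheory.IntegrableOn
      (fun η => (8 * (j : ℝ) + 12) *
        ((hermiteH (2 * j + 1 + 2)).eval η * Real.exp (-η ^ 2 / 4))) (Set.Ioi (0:ℝ)) :=
    (integrableOn_poly_gauss _).const_mul _
  have i3 : MeasureTheory.IntegrableOn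
      (fun η => ((4 * (j : ℝ) + 6) * (4 * (j : ℝ) + 4)) *
        ((hermiteH (2 * j + 1)).eval η * Real.exp (-η ^ 2 / 4))) (Set.Ioi (0:ℝ)) :=
    (integrableOn_poly_gauss _).const_mul _
  have i12 : MeasureTheory.IntegrableOn
      (fun η => (hermiteH (2 * j + 1 + 4)).eval η * Real.exp (-η ^ 2 / 4)
        + (8 * (j : ℝ) + 12) * ((hermiteH (2 * j + 1 + 2)).eval η * Real.exp (-η ^ 2 / 4)))
      (Set.Ioi (0:ℝ)) := i1.add i2
  rw [MeasureTheory.integral_add i12 i3, MeasureTheory.integral_add i1 i2,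
    MeasureTheory.integral_const_mul, MeasureTheory.integral_const_mul]
  have e1 : 2 * j + 1 + 4 = (2 * j + 4) + 1 := by ring
  have e2 : 2 * j + 1 + 2 = (2 * j + 2) + 1 := by ring
  rw [e1, e2, integral_hermiteH_gauss (2 * j + 4), integral_hermiteH_gauss (2 * j + 2),
    integral_hermiteH_gauss (2 * j)]
  have v1 : 2 * j + 4 = 2 * (j + 2) := by ring
  have v2 : 2 * j + 2 = 2 * (j + 1) := by ring
  rw [v1, v2, eval_zero_hermiteH_even (j + 2), eval_zero_hermiteH_even (j + 1),
    eval_zero_hermiteH_even j]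
  have d1 : 2 * (j + 2) - 1 = 2 * (j + 1) + 1 := by omega
  have d2 : 2 * (j + 1) - 1 = 2 * j + 1 := by omega
  have d3 : 2 * (j + 1) - 3 = 2 * j - 1 := by omega
  rw [d1, d3, dfac_step (j + 1), d2, dfac_step j]
  have hnp : ∀ m : ℕ, ((-2:ℝ)) ^ m = (-1) ^ m * 2 ^ m := fun m => by
    rw [show (-2:ℝ) = -1 * 2 by norm_num, mul_pow]
  simp only [hnp]
  push_cast
  ring
end

section
/- Let Z : [B, ∞) → ℝ be a C² function satisfying Z'' = H·Z + K, where |H(x)| ≤ C e^{−ωx} and |K(x)| ≤ C e^{−ωx} for constants C, ω > 0, and suppose |Z(x)| ≤ C e^{ωx/2} on [B, ∞). Then there exist constants C₁, C₀ ∈ ℝ such that Z(x) = C₁x + C₀ + O(e^{−ωx/2}) as x → ∞. -/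
/-! Since `|H Z| ≤ C² e^{-ωx/2}`, the equation forces `Z''` to decay like `e^{-ωx/2}`. Hence `Z''`
is integrable at `+∞`, so `Z'` has a limit `C₁` with `Z' - C₁ = O(e^{-ωx/2})`; integrating once
more, `Z x - C₁ x` has a limit `C₀` with the same rate of convergence. -/

open Real Set Filter MeasureTheory

section ExpDecay

variable {F f : ℝ → ℝ} {a D δ : ℝ}

lemma integrableOn_Ioi_of_abs_le_mul_exp (hδ : 0 < δ) (hf : Measurable f)
    (hfb : ∀ x ∈ Ioi a, |f x| ≤ D * exp (-δ * x)) : IntegrableOn f (Ioi a) :=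
  ((exp_neg_integrableOn_Ioi a hδ).const_mul D).mono' hf.aestronglyMeasurable
    ((ae_restrict_mem measurableSet_Ioi).mono hfb)

lemma exists_abs_sub_le_of_hasDerivAt_of_abs_le_mul_exp (hδ : 0 < δ) (hf : Measurable f)
    (hF : ∀ x ∈ Ioi a, HasDerivAt F (f x) x) (hfb : ∀ x ∈ Ioi a, |f x| ≤ D * exp (-δ * x)) :
    ∃ L, ∀ x ∈ Ioi a, |F x - L| ≤ D / δ * exp (-δ * x) := by
  have hint := integrableOn_Ioi_of_abs_le_mul_exp hδ hf hfb
  refine ⟨limUnder atTop F, fun x hx => ?_⟩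
  have hsub : Ici x ⊆ Ioi a := Ici_subset_Ioi.2 hx
  have hFTC : ∫ t in Ioi x, f t = limUnder atTop F - F x :=
    integral_Ioi_of_hasDerivAt_of_tendsto' (fun y hy => hF y (hsub hy))
      (hint.mono_set (Ioi_subset_Ioi (le_of_lt hx)))
      (tendsto_limUnder_of_hasDerivAt_of_integrableOn_Ioi hF hint)
  have hexp : ∫ t in Ioi x, D * exp (-δ * t) = D / δ * exp (-δ * x) := by
    rw [integral_const_mul, integral_exp_mul_Ioi (by linarith)]
    field_simp
  calc |F x - limUnder atTop F| = ‖∫ t in Ioi x, f t‖ := by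
        rw [hFTC, Real.norm_eq_abs, abs_sub_comm]
    _ ≤ ∫ t in Ioi x, D * exp (-δ * t) :=
        norm_integral_le_of_norm_le ((exp_neg_integrableOn_Ioi x hδ).const_mul D)
          ((ae_restrict_mem measurableSet_Ioi).mono fun t ht => hfb t (hsub (Ioi_subset_Ici_self ht)))
    _ = D / δ * exp (-δ * x) := hexp

lemma exists_abs_sub_affine_le_of_abs_deriv_deriv_le_mul_exp (hδ : 0 < δ)
    (hF : DifferentiableOn ℝ F (Ioi a)) (hF' : DifferentiableOn ℝ (deriv F) (Ioi a))
    (hb : ∀ x ∈ Ioi a, |deriv (deriv F) x| ≤ D * exp (-δ * x)) :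
    ∃ C₁ C₀ : ℝ, ∀ x ∈ Ioi a, |F x - (C₁ * x + C₀)| ≤ D / δ / δ * exp (-δ * x) := by
  have hasDerivAt_deriv {G : ℝ → ℝ} (hG : DifferentiableOn ℝ G (Ioi a)) :
      ∀ x ∈ Ioi a, HasDerivAt G (deriv G x) x := fun x hx =>
    (hG.differentiableAt (isOpen_Ioi.mem_nhds hx)).hasDerivAt
  obtain ⟨C₁, h₁⟩ := exists_abs_sub_le_of_hasDerivAt_of_abs_le_mul_exp hδ (measurable_deriv _)
    (hasDerivAt_deriv hF') hb
  obtain ⟨C₀, h₀⟩ := exists_abs_sub_le_of_hasDerivAt_of_abs_le_mul_exp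
    (F := fun y => F y - y * C₁) hδ ((measurable_deriv F).sub_const C₁)
    (fun x hx => (hasDerivAt_deriv hF x hx).sub (hasDerivAt_mul_const C₁)) h₁
  refine ⟨C₁, C₀, fun x hx => ?_⟩
  convert h₀ x hx using 2; ring

lemma exists_forall_Ici_abs_le_mul_exp {g : ℝ → ℝ} {M : ℝ}
    (h : ∀ x ∈ Ioi a, |g x| ≤ M * exp (-δ * x)) :
    ∃ M' : ℝ, ∀ x, a ≤ x → |g x| ≤ M' * exp (-δ * x) := by
  refine ⟨max M (|g a| * exp (δ * a)), fun x hx => ?_⟩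
  rcases hx.lt_or_eq with hx | rfl
  · exact (h x hx).trans (by gcongr; exact le_max_left _ _)
  · calc |g a| = |g a| * exp (δ * a) * exp (-δ * a) := by
          rw [mul_assoc, ← exp_add]; simp
      _ ≤ max M (|g a| * exp (δ * a)) * exp (-δ * a) := by gcongr; exact le_max_right _ _

end ExpDecay

lemma abs_le_mul_exp_half_of_abs_le_mul_exp {f : ℝ → ℝ} {B C ω x : ℝ} (hω : 0 ≤ ω)
    (hf : ∀ x, B ≤ x → |f x| ≤ C * exp (-ω * x)) (hx : B ≤ x) :
    |f x| ≤ C * exp (-ω * B / 2) * exp (-ω * x / 2) := by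
  have hC : 0 ≤ C := nonneg_of_mul_nonneg_left ((abs_nonneg _).trans (hf B le_rfl)) (exp_pos _)
  calc |f x| ≤ C * exp (-ω * x) := hf x hx
    _ = C * (exp (-ω * x / 2) * exp (-ω * x / 2)) := by rw [← exp_add]; ring_nf
    _ ≤ C * (exp (-ω * B / 2) * exp (-ω * x / 2)) := by
        gcongr C * (exp ?_ * _); nlinarith
    _ = C * exp (-ω * B / 2) * exp (-ω * x / 2) := by ring

lemma abs_mul_le_mul_exp_half {h z C ω x : ℝ} (hh : |h| ≤ C * exp (-ω * x))
    (hz : |z| ≤ C * exp (ω * x / 2)) : |h * z| ≤ C ^ 2 * exp (-ω * x / 2) := by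
  calc |h * z| ≤ C * exp (-ω * x) * (C * exp (ω * x / 2)) := by
        rw [abs_mul]; exact mul_le_mul hh hz (abs_nonneg _) ((abs_nonneg _).trans hh)
    _ = C ^ 2 * exp (-ω * x / 2) := by rw [mul_mul_mul_comm, ← exp_add]; ring_nf

theorem linear_plus_decay_general (B C ω : ℝ) (hω : 0 < ω)
    (Z H K : ℝ → ℝ)
    (hZ : ContDiffOn ℝ 2 Z (Set.Ici B))
    (hode : ∀ x, B ≤ x → deriv (deriv Z) x = H x * Z x + K x)
    (hH : ∀ x, B ≤ x → |H x| ≤ C * Real.exp (-ω * x))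
    (hK : ∀ x, B ≤ x → |K x| ≤ C * Real.exp (-ω * x))
    (hZbd : ∀ x, B ≤ x → |Z x| ≤ C * Real.exp (ω * x / 2)) :
    ∃ C₁ C₀ M : ℝ, ∀ x, B ≤ x →
      |Z x - (C₁ * x + C₀)| ≤ M * Real.exp (-ω * x / 2) := by
  have half_eq (x : ℝ) : -ω * x / 2 = -(ω / 2) * x := by ring
  have hZ' : ContDiffOn ℝ 2 Z (Ioi B) := hZ.mono Ioi_subset_Ici_self
  have hdecay : ∀ x ∈ Ioi B,
      |deriv (deriv Z) x| ≤ (C ^ 2 + C * exp (-ω * B / 2)) * exp (-(ω / 2) * x) := by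
    intro x hx
    rw [hode x hx.le, add_mul, ← half_eq]
    exact (abs_add_le _ _).trans (add_le_add
      (abs_mul_le_mul_exp_half (hH x hx.le) (hZbd x hx.le))
      (abs_le_mul_exp_half_of_abs_le_mul_exp hω.le hK hx.le))
  obtain ⟨C₁, C₀, hIoi⟩ := exists_abs_sub_affine_le_of_abs_deriv_deriv_le_mul_exp (half_pos hω)
    (hZ'.differentiableOn two_ne_zero)
    ((hZ'.deriv_of_isOpen isOpen_Ioi le_rfl).differentiableOn one_ne_zero) hdecay
  obtain ⟨M, hM⟩ := exists_forall_Ici_abs_le_mul_exp hIoi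
  exact ⟨C₁, C₀, M, fun x hx => half_eq x ▸ hM x hx⟩

theorem linear_plus_decay (B C ω : ℝ) (hC : 0 < C) (hω : 0 < ω)
    (Z H K : ℝ → ℝ)
    (hZ : ContDiffOn ℝ 2 Z (Set.Ici B))
    (hode : ∀ x, B ≤ x → deriv (deriv Z) x = H x * Z x + K x)
    (hH : ∀ x, B ≤ x → |H x| ≤ C * Real.exp (-ω * x))
    (hK : ∀ x, B ≤ x → |K x| ≤ C * Real.exp (-ω * x))
    (hZbd : ∀ x, B ≤ x → |Z x| ≤ C * Real.exp (ω * x / 2)) :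
    ∃ C₁ C₀ M : ℝ, ∀ x, B ≤ x →
      |Z x - (C₁ * x + C₀)| ≤ M * Real.exp (-ω * x / 2) :=
  linear_plus_decay_general B C ω hω Z H K hZ hode hH hK hZbd
end
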